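/- Let $r \ge 3$, $l \ge r+2$. Let $G$ be a left-compressed $r$-graph on vertex set $[l]$ containing the clique $[l-1]^{(r)}$ and satisfying $|[l-2]^{(r-1)} \setminus E_l| \ge 2^{r-3} |E_{(l-1)l}|$. Then $\lambda(G) = \lambda([l-1]^{(r)})$. -/

import Mathlib

open Finset

/-- Weightings on vertex set `[n] = {1,…,n}`: nonnegative, summing to 1, zero outside `[n]`. -/
def simplexOn (n : ℕ) (x : ℕ → ℝ) : Prop :=
  (∀ i, 0 ≤ x i) ∧ (∑ i ∈ Finset.Icc 1 n, x i = 1) ∧ ∀ i, i ∉ Finset.Icc 1 n → x i = 0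

/-- `λ(F, x) = ∑_{e ∈ F} ∏_{i ∈ e} x i` for a family of finite sets `F`. -/
def lagF (E : Finset (Finset ℕ)) (x : ℕ → ℝ) : ℝ := ∑ e ∈ E, ∏ i ∈ e, x i

/-- The Lagrangian of the hypergraph with edge set `E` on vertex set `[n]`. -/
noncomputable def lagr (n : ℕ) (E : Finset (Finset ℕ)) : ℝ :=
  sSup {v : ℝ | ∃ x : ℕ → ℝ, simplexOn n x ∧ v = lagF E x}

/-- `E` is the edge set of an `r`-uniform hypergraph on vertex set `[n]`. -/
def isRGraph (r n : ℕ) (E : Finset (Finset ℕ)) : Prop :=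
  ∀ e ∈ E, e.card = r ∧ e ⊆ Finset.Icc 1 n

/-- The complete `r`-graph `[l]^(r)`: all `r`-subsets of `[l]`. -/
def completeR (r l : ℕ) : Finset (Finset ℕ) := (Finset.Icc 1 l).powersetCard r

/-- The link `E_i` of vertex `i`. -/
def link (E : Finset (Finset ℕ)) (i : ℕ) : Finset (Finset ℕ) :=
  (E.filter fun e => i ∈ e).image fun e => e.erase i

/-- The pair link `E_{ij}`. -/
def link2 (E : Finset (Finset ℕ)) (i j : ℕ) : Finset (Finset ℕ) :=
  (E.filter fun e => i ∈ e ∧ j ∈ e).image fun e => (e.erase i).erase j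

/-- `E_{i \ j} = E_i ∩ E_j^c`. -/
def linkDiff (E : Finset (Finset ℕ)) (i j : ℕ) : Finset (Finset ℕ) :=
  (link E i).filter fun A => insert j A ∉ E

/-- `A` dominates `B` from below: same size and the `k`-th smallest element of `A`
is at most the `k`-th smallest element of `B`, for every `k`. -/
def domBelow (A B : Finset ℕ) : Prop :=
  A.card = B.card ∧ ∀ k, (Finset.sort A (· ≤ ·)).getD k 0 ≤ (Finset.sort B (· ≤ ·)).getD k 0

/-- `E` is left-compressed. -/
def leftCompressed (E : Finset (Finset ℕ)) : Prop :=
  ∀ B ∈ E, ∀ A : Finset ℕ, (∀ a ∈ A, 1 ≤ a) → domBelow A B → A ∈ E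

/-- The vertex set `T` spans a clique in the `r`-graph `E`. -/
def hasCliqueOn (E : Finset (Finset ℕ)) (r : ℕ) (T : Finset ℕ) : Prop :=
  ∀ e ⊆ T, e.card = r → e ∈ E

/-- `x` is an optimal weighting for the `r`-graph `E` on `[n]`. -/
def isOptimal (n : ℕ) (E : Finset (Finset ℕ)) (x : ℕ → ℝ) : Prop :=
  simplexOn n x ∧ lagF E x = lagr n E

/-- Number of nonzero weights. -/
noncomputable def suppCard (n : ℕ) (x : ℕ → ℝ) : ℕ := ((Finset.Icc 1 n).filter fun i => x i ≠ 0).card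

/-- A minimal optimal weighting: optimal, and any weighting with fewer nonzero
weights has strictly smaller Lagrangian value. -/
def isMinOptimal (n : ℕ) (E : Finset (Finset ℕ)) (x : ℕ → ℝ) : Prop :=
  isOptimal n E x ∧
    ∀ y : ℕ → ℝ, simplexOn n y → suppCard n y < suppCard n x → lagF E y < lagr n E

/-!
Choose an optimal weighting `x` which, among all optimal ones, minimises `∑ v * x v`; by
left-compression it is non-increasing on `[l]`. If `x l = 0`, then `x` lives on the clique
`[l - 1]`. Otherwise every weight is positive and the first-order condition for the pair
`(l - 1, l)` reads `λ(D, x) = (x (l - 1) - x l) λ(E_{(l-1)l}, x)` with `D = [l - 2]^(r - 1) \ E_l`.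
If `E_{(l-1)l}` is empty, the weight of `l` can be moved to `l - 1` at no loss. Otherwise the
first-order conditions for the pairs `(i, l - 1)` give `x i ≤ x (l - 1) + x l` for `i ≤ l - 2`,
so with `u = x (l - 1)`, `t = x l` and `m = |E_{(l-1)l}|`,
`|D| u ^ (r - 1) ≤ λ(D, x) ≤ (u - t) (u + t) ^ (r - 2) m < 2 ^ (r - 3) u ^ (r - 1) m`,
contradicting the counting hypothesis.
-/

open Finset Function

theorem List.getD_orderedInsert_le_getD_orderedInsert {α : Type*} [LinearOrder α] {d i j : α}
    (hij : i ≤ j) {L : List α} (hL : L.Pairwise (· ≤ ·)) (k : ℕ) :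
    (L.orderedInsert (· ≤ ·) i).getD k d ≤ (L.orderedInsert (· ≤ ·) j).getD k d := by
  induction L generalizing i j k with
  | nil => cases k <;> simp [hij]
  | cons a L ih =>
    have hL' := List.pairwise_cons.mp hL
    by_cases hja : j ≤ a
    · simp only [List.orderedInsert_cons, if_pos (hij.trans hja), if_pos hja]
      cases k <;> simp [hij]
    by_cases hia : i ≤ a
    · simp only [List.orderedInsert_cons, if_pos hia, if_neg hja]
      cases k with
      | zero => simpa using hia
      | succ k =>
        have hcons : L.orderedInsert (· ≤ ·) a = a :: L := by
          cases L with
          | nil => rfl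
          | cons b L => simp [hL'.1 b (by simp)]
        simpa [hcons] using ih (le_of_not_ge hja) hL'.2 k
    · simp only [List.orderedInsert_cons, if_neg hia, if_neg hja]
      cases k with
      | zero => simp
      | succ k => simpa using ih hij hL'.2 k

theorem Finset.sort_insert_eq_orderedInsert {α : Type*} [LinearOrder α] {i : α} {A : Finset α}
    (h : i ∉ A) : (insert i A).sort (· ≤ ·) = (A.sort (· ≤ ·)).orderedInsert (· ≤ ·) i := by
  refine List.Perm.eq_of_pairwise' (r := (· ≤ ·)) (pairwise_sort _ _)
    ((pairwise_sort _ _).orderedInsert _ _) ?_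
  exact (((sort_perm_toList _ _).trans (toList_insert h)).trans
    (.cons _ (sort_perm_toList _ _).symm)).trans (List.perm_orderedInsert _ _ _).symm

theorem domBelow_insert_insert {i j : ℕ} (hij : i ≤ j) {A : Finset ℕ} (hi : i ∉ A) (hj : j ∉ A) :
    domBelow (insert i A) (insert j A) := by
  refine ⟨by rw [card_insert_of_notMem hi, card_insert_of_notMem hj], fun k => ?_⟩
  rw [sort_insert_eq_orderedInsert hi, sort_insert_eq_orderedInsert hj]
  exact List.getD_orderedInsert_le_getD_orderedInsert hij (pairwise_sort _ _) k

theorem leftCompressed.insert_mem {E : Finset (Finset ℕ)} (hE : leftCompressed E) {i j : ℕ}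
    (hi : 1 ≤ i) (hij : i ≤ j) {A : Finset ℕ} (hiA : i ∉ A) (hjA : j ∉ A)
    (hA : ∀ a ∈ A, 1 ≤ a) (hjE : insert j A ∈ E) : insert i A ∈ E :=
  hE _ hjE _ (by simpa [hi] using hA) (domBelow_insert_insert hij hiA hjA)

theorem simplexOn.le_one {n : ℕ} {x : ℕ → ℝ} (hx : simplexOn n x) (i : ℕ) : x i ≤ 1 := by
  by_cases hi : i ∈ Icc 1 n
  · exact hx.2.1 ▸ single_le_sum (fun j _ => hx.1 j) hi
  · simp [hx.2.2 i hi]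

theorem simplexOn.mono {m n : ℕ} {x : ℕ → ℝ} (hx : simplexOn m x) (hmn : m ≤ n) :
    simplexOn n x := by
  have hsub : Icc 1 m ⊆ Icc 1 n := Icc_subset_Icc_right hmn
  refine ⟨hx.1, ?_, fun i hi => hx.2.2 i fun h => hi (hsub h)⟩
  rw [← sum_subset hsub fun i _ hi => hx.2.2 i hi, hx.2.1]

theorem simplexOn.pred {n : ℕ} {x : ℕ → ℝ} (hx : simplexOn n x) (hxn : x n = 0) :
    simplexOn (n - 1) x := by
  obtain _ | n := n
  · simpa [simplexOn] using hx.2.1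
  refine ⟨hx.1, ?_, fun i hi => ?_⟩
  · simpa [sum_Icc_succ_top (Nat.le_add_left 1 n), hxn] using hx.2.1
  · by_cases hin : i = n + 1
    · rwa [hin]
    · exact hx.2.2 i (by simp_all; omega)

theorem exists_simplexOn {n : ℕ} (hn : 1 ≤ n) : ∃ x : ℕ → ℝ, simplexOn n x :=
  ⟨Pi.single 1 1, fun i => by rw [Pi.single_apply]; split_ifs <;> norm_num, by simp [hn],
    fun i hi => Pi.single_eq_of_ne (by rintro rfl; simp [hn] at hi) _⟩

theorem isCompact_setOf_simplexOn (n : ℕ) : IsCompact {x : ℕ → ℝ | simplexOn n x} := by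
  refine (isCompact_univ_pi fun _ => isCompact_Icc (a := (0 : ℝ)) (b := 1)).of_isClosed_subset
    ?_ fun x hx i _ => ⟨hx.1 i, hx.le_one i⟩
  simp only [simplexOn, Set.ofPred_and, Set.ofPred_forall]
  exact (isClosed_iInter fun i => isClosed_le continuous_const (continuous_apply i)).inter
    ((isClosed_eq (continuous_finsetSum _ fun i _ => continuous_apply i) continuous_const).inter
      (isClosed_iInter fun i => isClosed_iInter fun _ =>
        isClosed_eq (continuous_apply i) continuous_const))

theorem continuous_lagF (E : Finset (Finset ℕ)) : Continuous (lagF E) := by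
  unfold lagF; fun_prop

theorem lagF_mono {F E : Finset (Finset ℕ)} (hFE : F ⊆ E) {x : ℕ → ℝ} (hx : ∀ i, 0 ≤ x i) :
    lagF F x ≤ lagF E x :=
  sum_le_sum_of_subset_of_nonneg hFE fun _ _ _ => prod_nonneg fun i _ => hx i

theorem bddAbove_lagF_simplexOn (n : ℕ) (E : Finset (Finset ℕ)) :
    BddAbove {v : ℝ | ∃ x : ℕ → ℝ, simplexOn n x ∧ v = lagF E x} := by
  refine ⟨E.card, ?_⟩
  rintro _ ⟨x, hx, rfl⟩
  calc lagF E x ≤ ∑ _e ∈ E, (1 : ℝ) :=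
        sum_le_sum fun _ _ => prod_le_one (fun i _ => hx.1 i) fun i _ => hx.le_one i
    _ = E.card := by simp

theorem lagF_le_lagr {n : ℕ} (E : Finset (Finset ℕ)) {x : ℕ → ℝ} (hx : simplexOn n x) :
    lagF E x ≤ lagr n E :=
  le_csSup (bddAbove_lagF_simplexOn n E) ⟨x, hx, rfl⟩

theorem lagr_le_of_forall {n : ℕ} {E : Finset (Finset ℕ)} {c : ℝ} (hn : 1 ≤ n)
    (h : ∀ x : ℕ → ℝ, simplexOn n x → lagF E x ≤ c) : lagr n E ≤ c := by
  obtain ⟨x, hx⟩ := exists_simplexOn hn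
  exact csSup_le ⟨_, x, hx, rfl⟩ fun _ ⟨y, hy, hv⟩ => hv ▸ h y hy

theorem lagr_le_lagr {m n : ℕ} {F E : Finset (Finset ℕ)} (hm : 1 ≤ m) (hmn : m ≤ n)
    (hFE : F ⊆ E) : lagr m F ≤ lagr n E :=
  lagr_le_of_forall hm fun _ hx => (lagF_mono hFE hx.1).trans (lagF_le_lagr E (hx.mono hmn))

theorem isOptimal.lagF_le {n : ℕ} {E : Finset (Finset ℕ)} {x : ℕ → ℝ} (hx : isOptimal n E x)
    {y : ℕ → ℝ} (hy : simplexOn n y) : lagF E y ≤ lagF E x :=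
  hx.2 ▸ lagF_le_lagr E hy

theorem exists_isOptimal {n : ℕ} (hn : 1 ≤ n) (E : Finset (Finset ℕ)) :
    ∃ x : ℕ → ℝ, isOptimal n E x := by
  obtain ⟨x, hx, hmax⟩ := (isCompact_setOf_simplexOn n).exists_isMaxOn (exists_simplexOn hn)
    (continuous_lagF E).continuousOn
  exact ⟨x, hx, (lagF_le_lagr E hx).antisymm (lagr_le_of_forall hn fun y hy => hmax hy)⟩

def transfer (x : ℕ → ℝ) (i j : ℕ) (t : ℝ) : ℕ → ℝ :=
  update (update x i (x i + t)) j (x j - t)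

def linkAvoid (E : Finset (Finset ℕ)) (i j : ℕ) : Finset (Finset ℕ) :=
  (E.filter fun e => i ∈ e ∧ j ∉ e).image fun e => e.erase i

section Transfer

variable {x : ℕ → ℝ} {i j : ℕ} {t : ℝ}

theorem transfer_apply_left (hij : i ≠ j) : transfer x i j t i = x i + t := by
  simp [transfer, hij]

theorem transfer_apply_right : transfer x i j t j = x j - t := by
  simp [transfer]

theorem transfer_apply_of_ne {v : ℕ} (hvi : v ≠ i) (hvj : v ≠ j) : transfer x i j t v = x v := by
  simp [transfer, hvi, hvj]

theorem sum_mul_transfer (c : ℕ → ℝ) {s : Finset ℕ} (hi : i ∈ s) (hj : j ∈ s) (hij : i ≠ j) :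
    ∑ v ∈ s, c v * transfer x i j t v = ∑ v ∈ s, c v * x v + (c i - c j) * t := by
  have hj' : j ∈ s.erase i := mem_erase.2 ⟨hij.symm, hj⟩
  simp only [← add_sum_erase s _ hi, ← add_sum_erase _ _ hj', transfer_apply_left hij,
    transfer_apply_right]
  rw [sum_congr rfl fun v hv => by
    rw [transfer_apply_of_ne (ne_of_mem_erase (mem_of_mem_erase hv)) (ne_of_mem_erase hv)]]
  ring

theorem simplexOn.transfer {n : ℕ} (hx : simplexOn n x) (hi : i ∈ Icc 1 n) (hj : j ∈ Icc 1 n)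
    (hij : i ≠ j) (hti : -x i ≤ t) (htj : t ≤ x j) : simplexOn n (transfer x i j t) := by
  refine ⟨fun v => ?_, ?_, fun v hv => ?_⟩
  · by_cases hvj : v = j
    · rw [hvj, transfer_apply_right]; linarith
    by_cases hvi : v = i
    · rw [hvi, transfer_apply_left hij]; linarith
    rw [transfer_apply_of_ne hvi hvj]; exact hx.1 v
  · simpa [hx.2.1] using sum_mul_transfer (x := x) (t := t) (fun _ => 1) hi hj hij
  · rw [transfer_apply_of_ne (by rintro rfl; exact hv hi) (by rintro rfl; exact hv hj)]
    exact hx.2.2 v hv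

theorem prod_transfer_of_notMem {s : Finset ℕ} (hi : i ∉ s) (hj : j ∉ s) :
    ∏ v ∈ s, transfer x i j t v = ∏ v ∈ s, x v :=
  prod_congr rfl fun v hv =>
    transfer_apply_of_ne (by rintro rfl; exact hi hv) (by rintro rfl; exact hj hv)

theorem prod_transfer (hij : i ≠ j) (e : Finset ℕ) :
    ∏ v ∈ e, transfer x i j t v = ∏ v ∈ e, x v
      + (if i ∈ e ∧ j ∉ e then t * ∏ v ∈ e.erase i, x v else 0)
      - (if j ∈ e ∧ i ∉ e then t * ∏ v ∈ e.erase j, x v else 0)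
      + (if i ∈ e ∧ j ∈ e then (t * (x j - x i) - t ^ 2) * ∏ v ∈ (e.erase i).erase j, x v
          else 0) := by
  by_cases hi : i ∈ e <;> by_cases hj : j ∈ e
  · have hj' : j ∈ e.erase i := mem_erase.2 ⟨hij.symm, hj⟩
    rw [← mul_prod_erase e _ hi, ← mul_prod_erase _ _ hj', ← mul_prod_erase e x hi,
      ← mul_prod_erase _ x hj', prod_transfer_of_notMem (by simp) (by simp),
      transfer_apply_left hij, transfer_apply_right]
    simp [hi, hj]
    ring
  · rw [← mul_prod_erase e _ hi, ← mul_prod_erase e x hi,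
      prod_transfer_of_notMem (by simp) (fun h => hj (mem_of_mem_erase h)),
      transfer_apply_left hij]
    simp [hi, hj]
    ring
  · rw [← mul_prod_erase e _ hj, ← mul_prod_erase e x hj,
      prod_transfer_of_notMem (fun h => hi (mem_of_mem_erase h)) (by simp),
      transfer_apply_right]
    simp [hi, hj]
    ring
  · simp [prod_transfer_of_notMem hi hj, hi, hj]

end Transfer

section Links

variable {E : Finset (Finset ℕ)} {i j : ℕ}

theorem mem_link {A : Finset ℕ} : A ∈ link E i ↔ i ∉ A ∧ insert i A ∈ E := by
  simp only [link, mem_image, mem_filter]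
  constructor
  · rintro ⟨e, ⟨he, hie⟩, rfl⟩
    simpa [insert_erase hie] using he
  · rintro ⟨hiA, hA⟩
    exact ⟨insert i A, ⟨hA, mem_insert_self i A⟩, erase_insert hiA⟩

theorem mem_linkAvoid (hij : i ≠ j) {A : Finset ℕ} :
    A ∈ linkAvoid E i j ↔ i ∉ A ∧ j ∉ A ∧ insert i A ∈ E := by
  simp only [linkAvoid, mem_image, mem_filter]
  constructor
  · rintro ⟨e, ⟨he, hie, hje⟩, rfl⟩
    simpa [insert_erase hie, hje] using he
  · rintro ⟨hiA, hjA, hA⟩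
    exact ⟨insert i A, ⟨hA, mem_insert_self i A, by simp [hjA, hij.symm]⟩, erase_insert hiA⟩

theorem mem_link2 (hij : i ≠ j) {B : Finset ℕ} :
    B ∈ link2 E i j ↔ i ∉ B ∧ j ∉ B ∧ insert i (insert j B) ∈ E := by
  simp only [link2, mem_image, mem_filter]
  constructor
  · rintro ⟨e, ⟨he, hie, hje⟩, rfl⟩
    have hje' : j ∈ e.erase i := mem_erase.2 ⟨hij.symm, hje⟩
    simpa [insert_erase hje', insert_erase hie] using he
  · rintro ⟨hiB, hjB, hB⟩
    have hiB' : i ∉ insert j B := by simp [hij, hiB]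
    exact ⟨_, ⟨hB, mem_insert_self _ _, mem_insert_of_mem (mem_insert_self j B)⟩,
      by rw [erase_insert hiB', erase_insert hjB]⟩

theorem lagF_linkAvoid (x : ℕ → ℝ) :
    lagF (linkAvoid E i j) x = ∑ e ∈ E with i ∈ e ∧ j ∉ e, ∏ v ∈ e.erase i, x v :=
  sum_image fun _ he _ he' => erase_injOn' i (mem_filter.1 he).2.1 (mem_filter.1 he').2.1

theorem lagF_link2 (hij : i ≠ j) (x : ℕ → ℝ) :
    lagF (link2 E i j) x = ∑ e ∈ E with i ∈ e ∧ j ∈ e, ∏ v ∈ (e.erase i).erase j, x v := by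
  refine sum_image fun e he e' he' h => ?_
  simp only [coe_filter, Set.mem_ofPred_eq] at he he'
  exact erase_injOn' i he.2.1 he'.2.1 <| erase_injOn' j (mem_erase.2 ⟨hij.symm, he.2.2⟩)
    (mem_erase.2 ⟨hij.symm, he'.2.2⟩) h

theorem lagF_transfer (E : Finset (Finset ℕ)) (x : ℕ → ℝ) (hij : i ≠ j) (t : ℝ) :
    lagF E (transfer x i j t) = lagF E x
      + t * (lagF (linkAvoid E i j) x - lagF (linkAvoid E j i) x)
      + (t * (x j - x i) - t ^ 2) * lagF (link2 E i j) x := by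
  simp only [lagF_linkAvoid, lagF_link2 hij, mul_sum, mul_sub, sum_filter]
  simp only [lagF, prod_transfer hij, sum_add_distrib, sum_sub_distrib, mul_ite, mul_zero, mul_sub]
  ring

end Links

section Optimal

variable {r n : ℕ} {E : Finset (Finset ℕ)} {x : ℕ → ℝ} {i j : ℕ}

theorem isOptimal.stationary (hx : isOptimal n E x) (hi : i ∈ Icc 1 n) (hj : j ∈ Icc 1 n)
    (hij : i ≠ j) (hxi : 0 < x i) (hxj : 0 < x j) :
    lagF (linkAvoid E i j) x - lagF (linkAvoid E j i) x = (x i - x j) * lagF (link2 E i j) x := by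
  set a := lagF (linkAvoid E i j) x - lagF (linkAvoid E j i) x
  set C := lagF (link2 E i j) x
  set f : ℝ → ℝ := fun t => lagF E x + t * a + (t * (x j - x i) - t ^ 2) * C
  have hf : HasDerivAt f (a + (x j - x i) * C) 0 := by
    have := (((hasDerivAt_id (0 : ℝ)).mul_const a).const_add (lagF E x)).add
      ((((hasDerivAt_id (0 : ℝ)).mul_const (x j - x i)).sub (hasDerivAt_pow 2 (0 : ℝ))).mul_const C)
    exact this.congr_deriv (by simp)
  -- `f t = λ(E, transfer x i j t)`, and `transfer x i j t` is a weighting for `-x i < t < x j`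
  have hmax : IsLocalMax f 0 := by
    filter_upwards [Ioo_mem_nhds (neg_lt_zero.2 hxi) hxj] with t ht
    have h := hx.lagF_le (hx.1.transfer hi hj hij ht.1.le ht.2.le)
    rw [lagF_transfer E x hij] at h
    simp only [f]
    linarith
  linarith [hmax.hasDerivAt_eq_zero hf]

theorem leftCompressed.linkAvoid_subset (hE : leftCompressed E) (hG : isRGraph r n E)
    (hi : 1 ≤ i) (hij : i < j) : linkAvoid E j i ⊆ linkAvoid E i j := by
  intro A hA
  obtain ⟨hjA, hiA, hjE⟩ := (mem_linkAvoid hij.ne').1 hA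
  refine (mem_linkAvoid hij.ne).2 ⟨hiA, hjA, hE.insert_mem hi hij.le hiA hjA (fun a ha => ?_) hjE⟩
  exact (mem_Icc.1 ((hG _ hjE).2 (mem_insert_of_mem ha))).1

theorem lagF_le_lagF_transfer (hE : leftCompressed E) (hG : isRGraph r n E) (hx : ∀ v, 0 ≤ x v)
    (hi : 1 ≤ i) (hij : i < j) {t : ℝ} (ht : 0 ≤ t)
    (hq : 0 ≤ (t * (x j - x i) - t ^ 2) * lagF (link2 E i j) x) :
    lagF E x ≤ lagF E (transfer x i j t) := by
  have := lagF_mono (hE.linkAvoid_subset hG hi hij) hx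
  rw [lagF_transfer E x hij.ne]
  nlinarith

theorem exists_isOptimal_antitoneOn (hE : leftCompressed E) (hG : isRGraph r n E) (hn : 1 ≤ n) :
    ∃ x : ℕ → ℝ, isOptimal n E x ∧ AntitoneOn x (Icc 1 n) := by
  obtain ⟨x₀, hx₀⟩ := exists_isOptimal hn E
  have hM : IsCompact {x | isOptimal n E x} :=
    (isCompact_setOf_simplexOn n).inter_right (isClosed_eq (continuous_lagF E) continuous_const)
  -- an optimal weighting minimising `∑ v * x v` has no inversions
  have hΦ : Continuous fun x : ℕ → ℝ => ∑ v ∈ Icc 1 n, (v : ℝ) * x v := by fun_prop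
  obtain ⟨x, hx, hmin⟩ := hM.exists_isMinOn ⟨x₀, hx₀⟩ hΦ.continuousOn
  refine ⟨x, hx, fun i hi j hj hij => ?_⟩
  by_contra! hlt
  have hij' : i < j := hij.lt_of_ne (by rintro rfl; exact lt_irrefl _ hlt)
  have hy : simplexOn n (transfer x i j (x j - x i)) :=
    hx.1.transfer hi hj hij'.ne (by linarith [hx.1.1 i]) (by linarith [hx.1.1 i])
  have hle := lagF_le_lagF_transfer hE hG hx.1.1 (mem_Icc.1 hi).1 hij'
    (t := x j - x i) (by linarith) (le_of_eq (by ring))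
  have hmin' := isMinOn_iff.1 hmin _ ⟨hy, (lagF_le_lagr E hy).antisymm (hx.2 ▸ hle)⟩
  rw [sum_mul_transfer _ hi hj hij'.ne] at hmin'
  have : (i : ℝ) < j := by exact_mod_cast hij'
  nlinarith

theorem isOptimal.lagF_linkAvoid_sdiff (hx : isOptimal n E x) (hE : leftCompressed E)
    (hG : isRGraph r n E) (hi : i ∈ Icc 1 n) (hj : j ∈ Icc 1 n) (hij : i < j)
    (hxi : 0 < x i) (hxj : 0 < x j) :
    lagF (linkAvoid E i j \ linkAvoid E j i) x = (x i - x j) * lagF (link2 E i j) x :=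
  (sum_sdiff_eq_sub (hE.linkAvoid_subset hG (mem_Icc.1 hi).1 hij)).trans
    (hx.stationary hi hj hij.ne hxi hxj)

end Optimal

theorem sub_mul_add_pow_lt {u t : ℝ} (ht : 0 < t) (htu : t ≤ u) (k : ℕ) :
    (u - t) * (u + t) ^ (k + 1) < 2 ^ k * u ^ (k + 2) :=
  calc (u - t) * (u + t) ^ (k + 1) = (u ^ 2 - t ^ 2) * (u + t) ^ k := by ring
    _ < u ^ 2 * (u + t) ^ k := mul_lt_mul_of_pos_right (by nlinarith) (pow_pos (by linarith) k)
    _ ≤ u ^ 2 * (2 * u) ^ k :=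
        mul_le_mul_of_nonneg_left (pow_le_pow_left₀ (by linarith) (by linarith) k) (sq_nonneg u)
    _ = 2 ^ k * u ^ (k + 2) := by ring

section Counting

variable {F : Finset (Finset ℕ)} {x : ℕ → ℝ} {k : ℕ} {c : ℝ}

theorem card_mul_pow_le_lagF (hc : 0 ≤ c) (hF : ∀ A ∈ F, A.card = k)
    (hx : ∀ A ∈ F, ∀ a ∈ A, c ≤ x a) : F.card * c ^ k ≤ lagF F x := by
  rw [← nsmul_eq_mul]
  refine card_nsmul_le_sum _ _ _ fun A hA => ?_
  rw [← hF A hA, ← prod_const]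
  exact prod_le_prod (fun _ _ => hc) (hx A hA)

theorem lagF_le_card_mul_pow (hx0 : ∀ v, 0 ≤ x v) (hF : ∀ A ∈ F, A.card = k)
    (hx : ∀ A ∈ F, ∀ a ∈ A, x a ≤ c) : lagF F x ≤ F.card * c ^ k := by
  rw [← nsmul_eq_mul]
  refine sum_le_card_nsmul _ _ _ fun A hA => ?_
  rw [← hF A hA, ← prod_const]
  exact prod_le_prod (fun v _ => hx0 v) (hx A hA)

end Counting

section TopVertices

variable {r l : ℕ} {E : Finset (Finset ℕ)} {x : ℕ → ℝ}

theorem lagF_le_lagr_of_apply_eq_zero (hG : isRGraph r l E) (hx : simplexOn l x) (hxl : x l = 0) :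
    lagF E x ≤ lagr (l - 1) (completeR r (l - 1)) := by
  have hsub : E.filter (l ∉ ·) ⊆ completeR r (l - 1) := by
    intro e he
    obtain ⟨heE, hle⟩ := mem_filter.1 he
    refine mem_powersetCard.2 ⟨fun a ha => ?_, (hG e heE).1⟩
    have := mem_Icc.1 ((hG e heE).2 ha)
    have : a ≠ l := by rintro rfl; exact hle ha
    exact mem_Icc.2 (by omega)
  calc lagF E x = lagF (E.filter (l ∉ ·)) x :=
        (sum_filter_of_ne (p := (l ∉ ·)) fun _ _ h hle => h (prod_eq_zero hle hxl)).symm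
    _ ≤ lagF (completeR r (l - 1)) x := lagF_mono hsub hx.1
    _ ≤ _ := lagF_le_lagr _ (hx.pred hxl)

theorem mem_of_completeR_subset (hK : completeR r (l - 1) ⊆ E) {s : Finset ℕ}
    (hs : s ⊆ Icc 1 l) (hls : l ∉ s) (hc : s.card = r) : s ∈ E := by
  refine hK (mem_powersetCard.2 ⟨fun a ha => ?_, hc⟩)
  have := mem_Icc.1 (hs ha)
  have : a ≠ l := by rintro rfl; exact hls ha
  exact mem_Icc.2 (by omega)

theorem lagF_linkAvoid_sdiff_le (hG : isRGraph r l E) (hK : completeR r (l - 1) ⊆ E)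
    (hx : ∀ v, 0 ≤ x v) {i : ℕ} (hi : 1 ≤ i) (hil : i ≤ l - 2) :
    lagF (linkAvoid E i (l - 1) \ linkAvoid E (l - 1) i) x
      ≤ x l * lagF (link2 E i (l - 1)) x := by
  have hil' : i ≠ l - 1 := by omega
  have hiI : i ∈ Icc 1 l := mem_Icc.2 ⟨hi, by omega⟩
  have hl1I : l - 1 ∈ Icc 1 l := mem_Icc.2 ⟨by omega, by omega⟩
  -- a set `A` with `A + i ∈ E` but `A + (l - 1) ∉ E` must contain `l`, as `[l - 1]` is a clique
  have hN : ∀ A ∈ linkAvoid E i (l - 1) \ linkAvoid E (l - 1) i,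
      l ∈ A ∧ A.erase l ∈ link2 E i (l - 1) := by
    intro A hA
    simp only [mem_sdiff, mem_linkAvoid hil', mem_linkAvoid hil'.symm] at hA
    obtain ⟨⟨hiA, hl1A, hAE⟩, hnot⟩ := hA
    have hsub : insert i A ⊆ Icc 1 l := (hG _ hAE).2
    have hcard : A.card + 1 = r := by rw [← card_insert_of_notMem hiA, (hG _ hAE).1]
    have hlA : l ∈ A := by
      by_contra hlA
      refine hnot ⟨hl1A, hiA, mem_of_completeR_subset hK ?_ ?_ ?_⟩
      · exact insert_subset hl1I ((subset_insert i A).trans hsub)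
      · simp only [mem_insert, not_or]; exact ⟨by omega, hlA⟩
      · rw [card_insert_of_notMem hl1A, hcard]
    refine ⟨hlA, (mem_link2 hil').2 ⟨fun h => hiA (mem_of_mem_erase h),
      fun h => hl1A (mem_of_mem_erase h), mem_of_completeR_subset hK ?_ ?_ ?_⟩⟩
    · exact insert_subset hiI (insert_subset hl1I
        ((erase_subset l A).trans ((subset_insert i A).trans hsub)))
    · simp only [mem_insert, mem_erase, not_or]; exact ⟨by omega, by omega, by simp⟩
    · rw [card_insert_of_notMem (by simp [hil', hiA]), card_insert_of_notMem
        (fun h => hl1A (mem_of_mem_erase h)), card_erase_of_mem hlA]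
      have := card_pos.2 ⟨l, hlA⟩
      omega
  calc _ = x l * lagF ((linkAvoid E i (l - 1) \ linkAvoid E (l - 1) i).image (·.erase l)) x := by
        rw [lagF, lagF, sum_image fun A hA B hB => erase_injOn' l (hN A hA).1 (hN B hB).1,
          mul_sum]
        exact sum_congr rfl fun A hA => (mul_prod_erase A x (hN A hA).1).symm
    _ ≤ _ := mul_le_mul_of_nonneg_left
        (lagF_mono (image_subset_iff.2 fun A hA => (hN A hA).2) hx) (hx l)

theorem exists_mem_link2_subset_Icc (hK : completeR r (l - 1) ⊆ E) (hr : 2 ≤ r)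
    (hl : r + 1 ≤ l) {i : ℕ} (hi : 1 ≤ i) (hil : i ≤ l - 2) :
    ∃ B ∈ link2 E i (l - 1), B ⊆ Icc 1 (l - 2) := by
  obtain ⟨B, hB, hBc⟩ := exists_subset_card_eq (s := (Icc 1 (l - 2)).erase i) (n := r - 2)
    (by rw [card_erase_of_mem (mem_Icc.2 ⟨hi, hil⟩), Nat.card_Icc]; omega)
  have hBI : ∀ b ∈ B, 1 ≤ b ∧ b ≤ l - 2 ∧ b ≠ i := fun b hb => by
    have := mem_erase.1 (hB hb); have := mem_Icc.1 this.2; omega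
  refine ⟨B, (mem_link2 (by omega)).2 ⟨fun h => (hBI i h).2.2 rfl,
    fun h => by have := hBI _ h; omega, mem_of_completeR_subset hK ?_ ?_ ?_⟩,
    (hB.trans (erase_subset i _))⟩
  · refine insert_subset (mem_Icc.2 ⟨hi, by omega⟩)
      (insert_subset (mem_Icc.2 ⟨by omega, by omega⟩) fun b hb => ?_)
    have := hBI b hb; exact mem_Icc.2 (by omega)
  · simp only [mem_insert, not_or]
    exact ⟨by omega, by omega, fun h => by have := hBI _ h; omega⟩
  · rw [card_insert_of_notMem (by simp [show i ≠ l - 1 by omega]; exact fun h => (hBI i h).2.2 rfl),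
      card_insert_of_notMem (fun h => by have := hBI _ h; omega), hBc]
    omega

theorem isOptimal.apply_le_add (hx : isOptimal l E x) (hE : leftCompressed E)
    (hG : isRGraph r l E) (hK : completeR r (l - 1) ⊆ E) (hr : 2 ≤ r) (hl : r + 1 ≤ l)
    (hpos : ∀ v ∈ Icc 1 l, 0 < x v) {i : ℕ} (hi : 1 ≤ i) (hil : i ≤ l - 2) :
    x i ≤ x (l - 1) + x l := by
  have hiI : i ∈ Icc 1 l := mem_Icc.2 ⟨hi, by omega⟩
  have hl1I : l - 1 ∈ Icc 1 l := mem_Icc.2 ⟨by omega, by omega⟩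
  have hle := lagF_linkAvoid_sdiff_le hG hK hx.1.1 hi hil
  rw [hx.lagF_linkAvoid_sdiff hE hG hiI hl1I (by omega) (hpos i hiI) (hpos _ hl1I)] at hle
  obtain ⟨B, hB, hBI⟩ := exists_mem_link2_subset_Icc hK hr hl hi hil
  have hC : 0 < lagF (link2 E i (l - 1)) x :=
    (prod_pos fun b hb => hpos b (Icc_subset_Icc_right (by omega) (hBI hb))).trans_le
      (single_le_sum (f := fun B => ∏ v ∈ B, x v) (fun B _ => prod_nonneg fun v _ => hx.1.1 v) hB)
  nlinarith

theorem powersetCard_sdiff_link_eq (hG : isRGraph r l E) (hK : completeR r (l - 1) ⊆ E)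
    (hr : 1 ≤ r) (hl : 2 ≤ l) :
    (Icc 1 (l - 2)).powersetCard (r - 1) \ link E l
      = linkAvoid E (l - 1) l \ linkAvoid E l (l - 1) := by
  have hne : l - 1 ≠ l := by omega
  ext A
  simp only [mem_sdiff, mem_powersetCard, mem_link, mem_linkAvoid hne, mem_linkAvoid hne.symm]
  constructor
  · rintro ⟨⟨hA, hcard⟩, hnot⟩
    have hl1A : l - 1 ∉ A := fun h => by have := mem_Icc.1 (hA h); omega
    have hlA : l ∉ A := fun h => by have := mem_Icc.1 (hA h); omega
    refine ⟨⟨hl1A, hlA, mem_of_completeR_subset hK ?_ (by simp [hlA, hne.symm]) ?_⟩,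
      fun h => hnot ⟨hlA, h.2.2⟩⟩
    · refine insert_subset (mem_Icc.2 ⟨by omega, by omega⟩) fun a ha => ?_
      have := mem_Icc.1 (hA ha); exact mem_Icc.2 (by omega)
    · rw [card_insert_of_notMem hl1A, hcard]; omega
  · rintro ⟨⟨hl1A, hlA, hAE⟩, hnot⟩
    refine ⟨⟨fun a ha => ?_, ?_⟩, fun h => hnot ⟨hlA, hl1A, h.2⟩⟩
    · have := mem_Icc.1 ((hG _ hAE).2 (mem_insert_of_mem ha))
      have : a ≠ l - 1 := by rintro rfl; exact hl1A ha
      have : a ≠ l := by rintro rfl; exact hlA ha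
      exact mem_Icc.2 (by omega)
    · have := (hG _ hAE).1; rw [card_insert_of_notMem hl1A] at this; omega

theorem isOptimal.card_powersetCard_sdiff_link_lt (hx : isOptimal l E x)
    (hanti : AntitoneOn x (Icc 1 l)) (hE : leftCompressed E) (hG : isRGraph r l E)
    (hK : completeR r (l - 1) ⊆ E) (hr : 3 ≤ r) (hl : r + 1 ≤ l) (hxl : 0 < x l)
    (hlink : (link2 E (l - 1) l).Nonempty) :
    ((Icc 1 (l - 2)).powersetCard (r - 1) \ link E l).card
      < 2 ^ (r - 3) * (link2 E (l - 1) l).card := by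
  have hne : l - 1 ≠ l := by omega
  have hlI : l ∈ Icc 1 l := mem_Icc.2 ⟨by omega, le_rfl⟩
  have hl1I : l - 1 ∈ Icc 1 l := mem_Icc.2 ⟨by omega, by omega⟩
  have hpos : ∀ v ∈ Icc 1 l, 0 < x v := fun v hv => hxl.trans_le (hanti hv hlI (mem_Icc.1 hv).2)
  have hle : ∀ v ∈ Icc 1 (l - 2), x (l - 1) ≤ x v := fun v hv =>
    hanti (mem_Icc.2 ⟨(mem_Icc.1 hv).1, by have := (mem_Icc.1 hv).2; omega⟩) hl1I
      (by have := (mem_Icc.1 hv).2; omega)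
  have hst := hx.lagF_linkAvoid_sdiff hE hG hl1I hlI (by omega) (hpos _ hl1I) hxl
  rw [← powersetCard_sdiff_link_eq hG hK (by omega) (by omega)] at hst
  set D := (Icc 1 (l - 2)).powersetCard (r - 1) \ link E l
  set P := link2 E (l - 1) l
  set u := x (l - 1)
  set t := x l
  have hlow : D.card * u ^ (r - 1) ≤ lagF D x := by
    refine card_mul_pow_le_lagF (hpos _ hl1I).le (fun A hA => ?_) fun A hA a ha => hle a ?_
    · exact (mem_powersetCard.1 (mem_sdiff.1 hA).1).2
    · exact (mem_powersetCard.1 (mem_sdiff.1 hA).1).1 ha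
  have hup : lagF P x ≤ P.card * (u + t) ^ (r - 2) := by
    refine lagF_le_card_mul_pow hx.1.1 (fun B hB => ?_) fun B hB b hb => ?_
    · obtain ⟨hl1B, hlB, hBE⟩ := (mem_link2 hne).1 hB
      have := (hG _ hBE).1
      rw [card_insert_of_notMem (by simp [hne, hl1B]), card_insert_of_notMem hlB] at this
      omega
    · obtain ⟨hl1B, hlB, hBE⟩ := (mem_link2 hne).1 hB
      have := mem_Icc.1 ((hG _ hBE).2 (mem_insert_of_mem (mem_insert_of_mem hb)))
      have : b ≠ l - 1 := by rintro rfl; exact hl1B hb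
      have : b ≠ l := by rintro rfl; exact hlB hb
      exact hx.apply_le_add hE hG hK (by omega) hl hpos (by omega) (by omega)
  obtain ⟨k, rfl⟩ : ∃ k, r = k + 3 := ⟨r - 3, by omega⟩
  simp only [show k + 3 - 1 = k + 2 by omega, show k + 3 - 2 = k + 1 by omega,
    Nat.add_sub_cancel] at hlow hup ⊢
  by_contra! hcount
  have hcount' : (2 ^ k * P.card : ℝ) ≤ D.card := by exact_mod_cast hcount
  have hP : (0 : ℝ) < P.card := by exact_mod_cast hlink.card_pos
  have htu : t ≤ u := hanti hl1I hlI (by omega)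
  have hineq := sub_mul_add_pow_lt hxl htu k
  have : P.card * (2 ^ k * u ^ (k + 2)) ≤ P.card * ((u - t) * (u + t) ^ (k + 1)) :=
    calc P.card * (2 ^ k * u ^ (k + 2)) ≤ D.card * u ^ (k + 2) := by
          rw [← mul_assoc, mul_comm (P.card : ℝ)]
          exact mul_le_mul_of_nonneg_right hcount' (pow_pos (hpos _ hl1I) _).le
      _ ≤ (u - t) * lagF P x := hst ▸ hlow
      _ ≤ (u - t) * (P.card * (u + t) ^ (k + 1)) :=
          mul_le_mul_of_nonneg_left hup (by linarith)
      _ = P.card * ((u - t) * (u + t) ^ (k + 1)) := by ring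
  linarith [(mul_le_mul_iff_right₀ hP).1 this]

end TopVertices

theorem leftCompressed_clique_lagrangian_eq (r l : ℕ) (E : Finset (Finset ℕ))
    (hr : 3 ≤ r) (hl : r + 2 ≤ l)
    (hG : isRGraph r l E) (hlc : leftCompressed E)
    (hclq : completeR r (l - 1) ⊆ E)
    (hcount : 2 ^ (r - 3) * (link2 E (l - 1) l).card ≤
      (((Finset.Icc 1 (l - 2)).powersetCard (r - 1)) \ link E l).card) :
    lagr l E = lagr (l - 1) (completeR r (l - 1)) := by
  refine le_antisymm ?_ (lagr_le_lagr (by omega) (Nat.sub_le l 1) hclq)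
  obtain ⟨x, hx, hanti⟩ := exists_isOptimal_antitoneOn hlc hG (by omega : 1 ≤ l)
  rw [← hx.2]
  rcases (hx.1.1 l).eq_or_lt with hxl | hxl
  · exact lagF_le_lagr_of_apply_eq_zero hG hx.1 hxl.symm
  rcases (link2 E (l - 1) l).eq_empty_or_nonempty with hlink | hlink
  · have hy := hx.1.transfer (i := l - 1) (j := l) (t := x l) (mem_Icc.2 ⟨by omega, by omega⟩)
      (mem_Icc.2 ⟨by omega, le_rfl⟩) (by omega) (by linarith [hx.1.1 (l - 1)]) le_rfl
    calc lagF E x ≤ lagF E (transfer x (l - 1) l (x l)) :=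
          lagF_le_lagF_transfer hlc hG hx.1.1 (by omega) (by omega) hxl.le (by simp [hlink, lagF])
      _ ≤ _ := lagF_le_lagr_of_apply_eq_zero hG hy (by simp [transfer_apply_right])
  · exact absurd hcount (not_le.2
      (hx.card_powersetCard_sdiff_link_lt hanti hlc hG hclq hr (by omega) hxl hlink))
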